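/- arXiv:0804.0436 — 3 statements merged into one kernel-verified Lean document; each statement's English description precedes it below -/
import Mathlib

section
/- Let 𝔐 = (V,⟨·,·⟩,A) be a model of neutral signature (2,2). If 𝔐 is spacelike Osserman, then 𝔐 is null Osserman, i.e. J_A(v) is nilpotent for every null vector v. -/
open Matrix BigOperators

/-- `V = ℝ⁴`. -/
abbrev V4 : Type := Fin 4 → ℝ

/-- The neutral inner product of signature (2,2):
`⟨x,y⟩ = −x₁y₁ − x₂y₂ + x₃y₃ + x₄y₄`. -/
def nip (x y : V4) : ℝ := -(x 0 * y 0) - x 1 * y 1 + x 2 * y 2 + x 3 * y 3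

/-- The signs `ε₁ = ε₂ = −1`, `ε₃ = ε₄ = 1`. -/
def eps : Fin 4 → ℝ := ![-1, -1, 1, 1]

/-- The standard basis vectors `e i`. -/
def stdb (i : Fin 4) : V4 := fun j => if j = i then 1 else 0

/-- A 4-linear map `A : V⁴ → ℝ` (linearity in each slot). -/
def IsMultilinear (A : V4 → V4 → V4 → V4 → ℝ) : Prop :=
  (∀ (c : ℝ) (x x' y z w : V4), A (c • x + x') y z w = c * A x y z w + A x' y z w) ∧
  (∀ (c : ℝ) (x y y' z w : V4), A x (c • y + y') z w = c * A x y z w + A x y' z w) ∧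
  (∀ (c : ℝ) (x y z z' w : V4), A x y (c • z + z') w = c * A x y z w + A x y z' w) ∧
  (∀ (c : ℝ) (x y z w w' : V4), A x y z (c • w + w') = c * A x y z w + A x y z w')

/-- Curvature symmetries:
`A(x,y,z,v) = −A(y,x,z,v) = A(z,v,x,y)` and the first Bianchi identity. -/
def HasCurvSym (A : V4 → V4 → V4 → V4 → ℝ) : Prop :=
  (∀ x y z w, A x y z w = - A y x z w) ∧
  (∀ x y z w, A x y z w = A z w x y) ∧
  (∀ x y z w, A x y z w + A y z x w + A z x y w = 0)

/-- An algebraic curvature tensor on `(V,⟨·,·⟩)`. -/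
def IsModel (A : V4 → V4 → V4 → V4 → ℝ) : Prop := IsMultilinear A ∧ HasCurvSym A

/-- The Jacobi operator `J_A(x)`, as a matrix: it is the unique linear map with
`⟨J_A(x)y, z⟩ = A(y,x,x,z)`; its matrix entries are `J i j = ε i * A(e j, x, x, e i)`. -/
def jacobi (A : V4 → V4 → V4 → V4 → ℝ) (x : V4) : Matrix (Fin 4) (Fin 4) ℝ :=
  Matrix.of fun i j => eps i * A (stdb j) x x (stdb i)

/-- Two endomorphisms of `V` are similar (conjugate by an invertible linear map). -/
def SimilarMat (M N : Matrix (Fin 4) (Fin 4) ℝ) : Prop :=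
  ∃ L : Matrix (Fin 4) (Fin 4) ℝ, IsUnit L.det ∧ M * L = L * N

/-- Spacelike Osserman: the characteristic polynomial of `J_A` is constant on
unit spacelike vectors. -/
def SpacelikeOsserman (A : V4 → V4 → V4 → V4 → ℝ) : Prop :=
  ∀ u w : V4, nip u u = 1 → nip w w = 1 → (jacobi A u).charpoly = (jacobi A w).charpoly

/-- Timelike Osserman: the characteristic polynomial of `J_A` is constant on
unit timelike vectors. -/
def TimelikeOsserman (A : V4 → V4 → V4 → V4 → ℝ) : Prop :=
  ∀ u w : V4, nip u u = -1 → nip w w = -1 → (jacobi A u).charpoly = (jacobi A w).charpoly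

/-- Null Osserman: `J_A(v)` is nilpotent for every null vector `v`. -/
def NullOsserman (A : V4 → V4 → V4 → V4 → ℝ) : Prop :=
  ∀ v : V4, nip v v = 0 → IsNilpotent (jacobi A v)

/-- Spacelike Jordan Osserman: the Jordan normal form of `J_A` is constant on
unit spacelike vectors. -/
def SpacelikeJordanOsserman (A : V4 → V4 → V4 → V4 → ℝ) : Prop :=
  ∀ u w : V4, nip u u = 1 → nip w w = 1 → SimilarMat (jacobi A u) (jacobi A w)

/-- Timelike Jordan Osserman. -/
def TimelikeJordanOsserman (A : V4 → V4 → V4 → V4 → ℝ) : Prop :=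
  ∀ u w : V4, nip u u = -1 → nip w w = -1 → SimilarMat (jacobi A u) (jacobi A w)

/-- Null Jordan Osserman: the Jordan normal form of `J_A` is constant on
nonzero null vectors. -/
def NullJordanOsserman (A : V4 → V4 → V4 → V4 → ℝ) : Prop :=
  ∀ u w : V4, u ≠ 0 → w ≠ 0 → nip u u = 0 → nip w w = 0 →
    SimilarMat (jacobi A u) (jacobi A w)

/-- The Ricci tensor `ρ_A(x,y) = Σᵢ εᵢ A(eᵢ,x,y,eᵢ)`. -/
def ricci (A : V4 → V4 → V4 → V4 → ℝ) (x y : V4) : ℝ :=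
  ∑ i : Fin 4, eps i * A (stdb i) x y (stdb i)

/-- Einstein: `ρ_A = c⟨·,·⟩`. -/
def Einstein (A : V4 → V4 → V4 → V4 → ℝ) : Prop :=
  ∃ c : ℝ, ∀ x y : V4, ricci A x y = c * nip x y

/-- The scalar curvature `τ_A = Σᵢ εᵢ ρ_A(eᵢ,eᵢ)`. -/
def scal (A : V4 → V4 → V4 → V4 → ℝ) : ℝ :=
  ∑ i : Fin 4, eps i * ricci A (stdb i) (stdb i)

/-- The Weyl tensor. -/
noncomputable def weyl (A : V4 → V4 → V4 → V4 → ℝ) (x y z v : V4) : ℝ :=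
  A x y z v + (scal A / 6) * (nip y z * nip x v - nip x z * nip y v)
    - (1/2) * (ricci A y z * nip x v - ricci A x z * nip y v
        + ricci A x v * nip y z - ricci A y v * nip x z)

/-- A 2-vector `x ∧ y`, represented by its antisymmetric coefficient matrix. -/
def wedge (x y : V4) : Matrix (Fin 4) (Fin 4) ℝ :=
  Matrix.of fun i j => x i * y j - x j * y i

/-- The Weyl tensor as a symmetric bilinear form on 2-vectors, determined by
`W_A(x∧y, z∧v) = W_A(x,y,z,v)`. -/
noncomputable def weylForm (A : V4 → V4 → V4 → V4 → ℝ) (α β : Matrix (Fin 4) (Fin 4) ℝ) : ℝ :=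
  (1/4) * ∑ i : Fin 4, ∑ j : Fin 4, ∑ k : Fin 4, ∑ l : Fin 4,
    α i j * β k l * weyl A (stdb i) (stdb j) (stdb k) (stdb l)

/-- `E₁^ε = (1/√2)(e₁∧e₂ + ε e₃∧e₄)`, `E₂^ε = (1/√2)(e₁∧e₃ + ε e₂∧e₄)`,
`E₃^ε = (1/√2)(e₁∧e₄ − ε e₂∧e₃)`.  For `ε = 1` this is the standard basis of the
self-dual 2-vectors `Λ⁺`; for `ε = −1`, of the anti-self-dual 2-vectors `Λ⁻`. -/
noncomputable def Evec (ε : ℝ) : Fin 3 → Matrix (Fin 4) (Fin 4) ℝ :=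
  ![(Real.sqrt 2)⁻¹ • (wedge (stdb 0) (stdb 1) + ε • wedge (stdb 2) (stdb 3)),
    (Real.sqrt 2)⁻¹ • (wedge (stdb 0) (stdb 2) + ε • wedge (stdb 1) (stdb 3)),
    (Real.sqrt 2)⁻¹ • (wedge (stdb 0) (stdb 3) - ε • wedge (stdb 1) (stdb 2))]

/-- The space `Λ⁺` of self-dual 2-vectors. -/
def LambdaPlus : Submodule ℝ (Matrix (Fin 4) (Fin 4) ℝ) :=
  Submodule.span ℝ (Set.range (Evec 1))

/-- The space `Λ⁻` of anti-self-dual 2-vectors. -/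
def LambdaMinus : Submodule ℝ (Matrix (Fin 4) (Fin 4) ℝ) :=
  Submodule.span ℝ (Set.range (Evec (-1)))

/-- Self-dual: the Weyl form vanishes identically on `Λ⁻`. -/
def SelfDual (A : V4 → V4 → V4 → V4 → ℝ) : Prop :=
  ∀ α ∈ LambdaMinus, ∀ β ∈ LambdaMinus, weylForm A α β = 0

/-- Anti-self-dual: the Weyl form vanishes identically on `Λ⁺`. -/
def AntiSelfDual (A : V4 → V4 → V4 → V4 → ℝ) : Prop :=
  ∀ α ∈ LambdaPlus, ∀ β ∈ LambdaPlus, weylForm A α β = 0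

/-- The curvature tensor `A⁰` of constant sectional curvature `+1`. -/
def Acurv0 (x y z v : V4) : ℝ := nip y z * nip x v - nip x z * nip y v

/-- The curvature tensor `A^Ψ` of a skew-adjoint endomorphism `Ψ`. -/
def AcurvPsi (Ψ : Matrix (Fin 4) (Fin 4) ℝ) (x y z v : V4) : ℝ :=
  nip (Ψ.mulVec y) z * nip (Ψ.mulVec x) v - nip (Ψ.mulVec x) z * nip (Ψ.mulVec y) v
    - 2 * nip (Ψ.mulVec x) y * nip (Ψ.mulVec z) v

/-- Skew-adjoint with respect to the neutral inner product. -/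
def SkewAdjointM (Ψ : Matrix (Fin 4) (Fin 4) ℝ) : Prop :=
  ∀ x y : V4, nip (Ψ.mulVec x) y = - nip x (Ψ.mulVec y)

/-- An orthogonal complex structure: skew-adjoint with `J² = −id`. -/
def OrthComplexStructure (J : Matrix (Fin 4) (Fin 4) ℝ) : Prop :=
  SkewAdjointM J ∧ J * J = -1

/-- An adapted paracomplex structure: skew-adjoint with `P² = id`. -/
def AdaptedParaStructure (P : Matrix (Fin 4) (Fin 4) ℝ) : Prop :=
  SkewAdjointM P ∧ P * P = 1

/-- A paraquaternionic structure. -/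
def Paraquaternionic (P₁ P₂ P₃ : Matrix (Fin 4) (Fin 4) ℝ) : Prop :=
  SkewAdjointM P₁ ∧ SkewAdjointM P₂ ∧ SkewAdjointM P₃ ∧
  P₁ * P₁ = -1 ∧ P₂ * P₂ = 1 ∧ P₃ * P₃ = 1 ∧
  P₁ * P₂ + P₂ * P₁ = 0 ∧ P₁ * P₃ + P₃ * P₁ = 0 ∧ P₂ * P₃ + P₃ * P₂ = 0

/-- The standard paraquaternionic structure: `Ψ₁`. -/
def psi1 : Matrix (Fin 4) (Fin 4) ℝ :=
  !![0, 1, 0, 0; -1, 0, 0, 0; 0, 0, 0, -1; 0, 0, 1, 0]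

/-- The standard paraquaternionic structure: `Ψ₂`. -/
def psi2 : Matrix (Fin 4) (Fin 4) ℝ :=
  !![0, 0, 1, 0; 0, 0, 0, 1; 1, 0, 0, 0; 0, 1, 0, 0]

/-- The standard paraquaternionic structure: `Ψ₃`. -/
def psi3 : Matrix (Fin 4) (Fin 4) ℝ :=
  !![0, 0, 0, 1; 0, 0, -1, 0; 0, -1, 0, 0; 1, 0, 0, 0]

/-- The curvature tensor `A_{κ₀,ξ}` of the Gilkey–Ivanova ansatz. -/
noncomputable def AKxi (κ₀ ξ11 ξ12 ξ13 ξ22 ξ23 ξ33 : ℝ) : V4 → V4 → V4 → V4 → ℝ :=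
  fun x y z w =>
    κ₀ * Acurv0 x y z w + (1/3) *
      (ξ11 * AcurvPsi psi1 x y z w + ξ22 * AcurvPsi psi2 x y z w
        + ξ33 * AcurvPsi psi3 x y z w + ξ12 * AcurvPsi (psi1 + psi2) x y z w
        + ξ13 * AcurvPsi (psi1 + psi3) x y z w + ξ23 * AcurvPsi (psi2 + psi3) x y z w)

/-- The `3 × 3` matrix `𝒥_{κ₀,ξ}`. -/
def Jmat (κ₀ ξ11 ξ12 ξ13 ξ22 ξ23 ξ33 : ℝ) : Matrix (Fin 3) (Fin 3) ℝ :=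
  κ₀ • (1 : Matrix (Fin 3) (Fin 3) ℝ) +
    !![ξ11 + ξ12 + ξ13, -ξ12, -ξ13;
       ξ12, -ξ22 - ξ12 - ξ23, -ξ23;
       ξ13, -ξ23, -ξ33 - ξ13 - ξ23]

/-- An oriented orthonormal basis of `(V,⟨·,·⟩)`: `b₁, b₂` timelike, `b₃, b₄` spacelike,
mutually orthogonal, with positively-oriented change-of-basis matrix. -/
def OrientedONB (b : Fin 4 → V4) : Prop :=
  (∀ i j : Fin 4, nip (b i) (b j) = if i = j then eps i else 0) ∧
  0 < (Matrix.of fun i j : Fin 4 => b j i).det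

/-! On spacelike vectors the Jacobi operator is homogeneous: `J(x) = ⟨x,x⟩ J(u)` with `u` a unit
vector, so the `k`-th coefficient of its characteristic polynomial is `⟨x,x⟩^(4-k) c_k` with `c_k`
fixed. Along any line `t ↦ t e₃ + x` both sides are polynomials in `t` which agree for large `t`,
hence everywhere; so the identity holds for every `x`, and at a null vector the characteristic
polynomial is `X⁴`. -/

open Polynomial

namespace Matrix

variable {n : Type*} [Fintype n] [DecidableEq n]

theorem charpoly_smul_eq_scaleRoots {K : Type*} [Field K] [Infinite K] (M : Matrix n n K)
    (c : K) : (c • M).charpoly = M.charpoly.scaleRoots c := by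
  rcases eq_or_ne c 0 with rfl | hc
  · simp [M.charpoly_monic.leadingCoeff]
  refine Polynomial.funext fun x => ?_
  have hscalar : scalar n x - c • M = c • (scalar n (x / c) - M) := by
    rw [smul_sub, scalar_apply, scalar_apply, ← diagonal_smul, Pi.smul_def, smul_eq_mul,
      mul_div_cancel₀ x hc]
  rw [eval_charpoly, hscalar, det_smul, ← eval_charpoly, ← charpoly_natDegree_eq_dim M,
    ← scaleRoots_eval_mul, mul_div_cancel₀ x hc]

theorem exists_charpoly_coeff_add_smul_add_sq_smul {R : Type*} [CommRing R]
    (M₀ M₁ M₂ : Matrix n n R) (k : ℕ) :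
    ∃ q : R[X], ∀ t : R, (M₀ + t • M₁ + t ^ 2 • M₂).charpoly.coeff k = q.eval t := by
  set P : Matrix n n R[X] := M₀.map C + (X : R[X]) • M₁.map C + (X : R[X]) ^ 2 • M₂.map C
  refine ⟨P.charpoly.coeff k, fun t => ?_⟩
  have hP : P.map (evalRingHom t) = M₀ + t • M₁ + t ^ 2 • M₂ := by
    ext i j
    simp only [P, map_apply, Matrix.add_apply, Matrix.smul_apply, smul_eq_mul, coe_evalRingHom,
      eval_add, eval_mul, eval_pow, eval_X, eval_C]
  rw [← hP, charpoly_map, coeff_map, coe_evalRingHom]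

theorem isNilpotent_of_charpoly_eq_X_pow {R : Type*} [CommRing R] {M : Matrix n n R}
    (hM : M.charpoly = X ^ Fintype.card n) : IsNilpotent M :=
  ⟨Fintype.card n, by simpa [hM] using M.aeval_self_charpoly⟩

end Matrix

theorem nip_smul_smul (c d : ℝ) (x y : V4) : nip (c • x) (d • y) = c * d * nip x y := by
  simp only [nip, Pi.smul_apply, smul_eq_mul]
  ring

namespace IsMultilinear

variable {A : V4 → V4 → V4 → V4 → ℝ}

theorem apply_smul_smul (hA : IsMultilinear A) (c : ℝ) (x y z w : V4) :
    A x (c • y) (c • z) w = c ^ 2 * A x y z w := by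
  obtain ⟨-, h₂, h₃, -⟩ := hA
  have hzero₂ : ∀ z', A x 0 z' w = 0 := fun z' => by
    simpa using h₂ 1 x 0 0 z' w
  have hzero₃ : A x y 0 w = 0 := by simpa using h₃ 1 x y 0 0 w
  have := h₂ c x y 0 (c • z) w
  rw [add_zero, hzero₂, add_zero] at this
  rw [this, ← add_zero (c • z), h₃, hzero₃]
  ring

theorem jacobi_smul (hA : IsMultilinear A) (c : ℝ) (x : V4) :
    jacobi A (c • x) = c ^ 2 • jacobi A x := by
  ext i j
  simp only [jacobi, of_apply, Matrix.smul_apply, smul_eq_mul, hA.apply_smul_smul]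
  ring

theorem jacobi_smul_add (hA : IsMultilinear A) (t : ℝ) (w x : V4) :
    jacobi A (t • w + x) = jacobi A x
      + t • of (fun i j => eps i * (A (stdb j) w x (stdb i) + A (stdb j) x w (stdb i)))
      + t ^ 2 • jacobi A w := by
  obtain ⟨-, h₂, h₃, -⟩ := hA
  ext i j
  simp only [jacobi, of_apply, Matrix.add_apply, Matrix.smul_apply, smul_eq_mul, h₂, h₃]
  ring

theorem charpoly_jacobi_of_pos (hA : IsMultilinear A) (h : SpacelikeOsserman A) {x : V4}
    (hx : 0 < nip x x) :
    (jacobi A x).charpoly = (jacobi A (stdb 2)).charpoly.scaleRoots (nip x x) := by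
  have hsqrt : Real.sqrt (nip x x) ≠ 0 := (Real.sqrt_pos.mpr hx).ne'
  set u := (Real.sqrt (nip x x))⁻¹ • x
  have hu : nip u u = 1 := by
    rw [nip_smul_smul, ← mul_inv, Real.mul_self_sqrt hx.le, inv_mul_cancel₀ hx.ne']
  have hxu : x = Real.sqrt (nip x x) • u := by
    rw [smul_inv_smul₀ hsqrt]
  have he : nip (stdb 2) (stdb 2) = 1 := by simp [nip, stdb]
  rw [hxu, hA.jacobi_smul, Real.sq_sqrt hx.le, charpoly_smul_eq_scaleRoots, h u (stdb 2) hu he,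
    ← hxu]

theorem charpoly_jacobi (hA : IsMultilinear A) (h : SpacelikeOsserman A) (x : V4) :
    (jacobi A x).charpoly = (jacobi A (stdb 2)).charpoly.scaleRoots (nip x x) := by
  set p := (jacobi A (stdb 2)).charpoly
  ext k
  obtain ⟨q, hq⟩ :
      ∃ q : ℝ[X], ∀ t : ℝ, (jacobi A (t • stdb 2 + x)).charpoly.coeff k = q.eval t := by
    simp only [hA.jacobi_smul_add]
    exact exists_charpoly_coeff_add_smul_add_sq_smul _ _ _ k
  have hnorm : ∀ t : ℝ, nip (t • stdb 2 + x) (t • stdb 2 + x) = t ^ 2 + 2 * x 2 * t + nip x x :=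
    fun t => by
      simp only [nip, stdb, Pi.add_apply, Pi.smul_apply, smul_eq_mul, Fin.reduceEq, if_true,
        if_false]
      ring
  have hqeq : q = C (p.coeff k) * (X ^ 2 + C (2 * x 2) * X + C (nip x x)) ^ (p.natDegree - k) := by
    refine eq_of_infinite_eval_eq _ _ ((Set.Ioi_infinite (2 * |x 2| + |nip x x| + 1)).mono ?_)
    intro t ht
    rw [Set.mem_Ioi] at ht
    have hpos : 0 < nip (t • stdb 2 + x) (t • stdb 2 + x) := by
      rw [hnorm]
      nlinarith [neg_abs_le (x 2), neg_abs_le (nip x x), abs_nonneg (x 2), abs_nonneg (nip x x)]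
    simp only [Set.mem_ofPred_eq, ← hq, charpoly_jacobi_of_pos hA h hpos, coeff_scaleRoots,
      hnorm, eval_mul, eval_pow, eval_add, eval_C, eval_X]
    ring
  have h0 := hq 0
  rw [zero_smul, zero_add, hqeq] at h0
  simp [h0, coeff_scaleRoots]

end IsMultilinear

/-- Lemma 2.1 (1): a spacelike Osserman model of signature (2,2) is null Osserman. -/
theorem spacelike_osserman_implies_null_osserman (A : V4 → V4 → V4 → V4 → ℝ)
    (hA : IsModel A) (h : SpacelikeOsserman A) : NullOsserman A := by
  intro v hv
  apply isNilpotent_of_charpoly_eq_X_pow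
  rw [hA.1.charpoly_jacobi h v, hv, scaleRoots_zero, (charpoly_monic _).leadingCoeff,
    charpoly_natDegree_eq_dim, one_smul]
end

section
/- Let P be an adapted paracomplex structure on (V,⟨·,·⟩), let κ_P ≠ 0, and let A = κ_PA^P. Then for every null vector v and every y ∈ V one has J_A(v)y = 3κ_P⟨y,Pv⟩Pv, and the model 𝔐 = (V,⟨·,·⟩,A) is null Jordan Osserman. -/
open Matrix BigOperators

/-!
Skew-adjointness of `P` gives `⟨Pv,v⟩ = 0`, so `A(y,v,v,z) = 3κ_P⟨y,Pv⟩⟨Pv,z⟩` and `J_A(v)` is the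
rank-one operator `y ↦ 3κ_P⟨y,Pv⟩Pv`. As `P² = id`, `a = Pv` is again nonzero and null whenever `v`
is, so this operator squares to zero and has rank one. In the basis `(a, b, p, q)`, where
`3κ_P⟨b,a⟩ = 1` and `p, q ⊥ a`, it is the elementary matrix `E₀₁`; hence all `J_A(v)` with `v` null
and nonzero are similar.
-/

lemma nip_comm (x y : V4) : nip x y = nip y x := by
  simp only [nip]; ring

lemma nip_stdb_right (x : V4) (i : Fin 4) : nip x (stdb i) = eps i * x i := by
  fin_cases i <;> simp [nip, stdb, eps]

lemma eps_mul_self (i : Fin 4) : eps i * eps i = 1 := by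
  fin_cases i <;> norm_num [eps]

lemma SkewAdjointM.nip_mulVec_self {Ψ : Matrix (Fin 4) (Fin 4) ℝ} (hΨ : SkewAdjointM Ψ)
    (x : V4) : nip (Ψ *ᵥ x) x = 0 := by
  linarith [hΨ x x, nip_comm x (Ψ *ᵥ x)]

lemma AdaptedParaStructure.nip_mulVec_mulVec {P : Matrix (Fin 4) (Fin 4) ℝ}
    (hP : AdaptedParaStructure P) (x y : V4) : nip (P *ᵥ x) (P *ᵥ y) = - nip x y := by
  rw [hP.1, mulVec_mulVec, hP.2, one_mulVec]

lemma AdaptedParaStructure.mulVec_ne_zero {P : Matrix (Fin 4) (Fin 4) ℝ}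
    (hP : AdaptedParaStructure P) {x : V4} (hx : x ≠ 0) : P *ᵥ x ≠ 0 := by
  intro h
  apply hx
  rw [← one_mulVec x, ← hP.2, ← mulVec_mulVec, h, mulVec_zero]

lemma SkewAdjointM.AcurvPsi_jacobi {Ψ : Matrix (Fin 4) (Fin 4) ℝ} (hΨ : SkewAdjointM Ψ)
    (x y z : V4) : AcurvPsi Ψ y x x z = 3 * nip y (Ψ *ᵥ x) * nip (Ψ *ᵥ x) z := by
  rw [AcurvPsi, hΨ.nip_mulVec_self, hΨ y x]
  ring

def nipRankOne (c : ℝ) (a : V4) : Matrix (Fin 4) (Fin 4) ℝ :=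
  Matrix.of fun i j => c * a i * (eps j * a j)

lemma nipRankOne_mulVec (c : ℝ) (a y : V4) :
    nipRankOne c a *ᵥ y = (c * nip y a) • a := by
  ext i
  simp only [nipRankOne, mulVec, dotProduct, of_apply, Fin.sum_univ_four, nip, eps,
    Pi.smul_apply, smul_eq_mul, cons_val]
  ring

lemma jacobi_eq_nipRankOne {A : V4 → V4 → V4 → V4 → ℝ} {x a : V4} {c : ℝ}
    (hA : ∀ y z, A y x x z = c * nip y a * nip a z) : jacobi A x = nipRankOne c a := by
  ext i j
  simp only [jacobi, nipRankOne, of_apply, hA, nip_stdb_right, nip_comm (stdb j)]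
  linear_combination (c * a i * (eps j * a j)) * eps_mul_self i

lemma nipRankOne_mul_frame {c : ℝ} {a b p q : V4} (ha : nip a a = 0) (hb : c * nip b a = 1)
    (hp : nip p a = 0) (hq : nip q a = 0) :
    nipRankOne c a * (of ![a, b, p, q])ᵀ = (of ![a, b, p, q])ᵀ * single 0 1 1 := by
  refine ext_of_mulVec_single fun j => ?_
  rw [← mulVec_mulVec, ← mulVec_mulVec, single_mulVec, mulVec_single_one, nipRankOne_mulVec]
  fin_cases j <;> simp [ha, hb, hp, hq, ← Pi.single.eq_def]

lemma sq_add_sq_pos_of_null {a : V4} (ha0 : a ≠ 0) (ha : nip a a = 0) :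
    0 < a 0 ^ 2 + a 1 ^ 2 := by
  by_contra! h
  refine ha0 (funext fun i => ?_)
  simp only [nip] at ha
  fin_cases i <;>
    simp only [Fin.zero_eta, Fin.mk_one, Fin.reduceFinMk, Fin.isValue, Pi.zero_apply] <;>
    nlinarith [sq_nonneg (a 0), sq_nonneg (a 1), sq_nonneg (a 2), sq_nonneg (a 3)]

lemma exists_null_frame {c : ℝ} (hc : c ≠ 0) {a : V4} (ha0 : a ≠ 0) (ha : nip a a = 0) :
    ∃ b p q : V4, c * nip b a = 1 ∧ nip p a = 0 ∧ nip q a = 0 ∧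
      IsUnit (of ![a, b, p, q]).det := by
  set s := a 0 ^ 2 + a 1 ^ 2
  have hs : 0 < s := sq_add_sq_pos_of_null ha0 ha
  have hnull : a 2 ^ 2 + a 3 ^ 2 = s := by simp only [nip] at ha; linear_combination ha
  -- `a, b` span a hyperbolic plane, `⟨b,a⟩ = 1/c`; `p, q` complete `a` to a basis of `a^⊥`.
  set b : V4 := (2 * c * s)⁻¹ • ![-a 0, -a 1, a 2, a 3]
  set p : V4 := ![-a 1, a 0, 0, 0]
  set q : V4 := ![0, 0, -a 3, a 2]
  have hdet : (of ![a, b, p, q]).det = -s / c := by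
    rw [det_succ_row_zero]
    simp [b, p, q, Fin.sum_univ_succ, det_fin_three, Fin.succAbove]
    field_simp
    linear_combination (-2 * s) * hnull
  refine ⟨b, p, q, ?_, ?_, ?_, ?_⟩
  · simp only [b, nip, smul_cons, smul_eq_mul, smul_empty, cons_val]
    field_simp
    linear_combination hnull
  · simp [p, nip, mul_comm]
  · simp [q, nip, mul_comm]
  · rw [hdet, isUnit_iff_ne_zero]
    exact div_ne_zero (neg_ne_zero.mpr hs.ne') hc

lemma SimilarMat.symm {M N : Matrix (Fin 4) (Fin 4) ℝ} (h : SimilarMat M N) : SimilarMat N M := by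
  obtain ⟨L, hL, hML⟩ := h
  refine ⟨L⁻¹, isUnit_nonsing_inv_det L hL, ?_⟩
  calc N * L⁻¹ = L⁻¹ * (L * N) * L⁻¹ := by
        rw [← mul_assoc, nonsing_inv_mul _ hL, one_mul]
    _ = L⁻¹ * M := by rw [← hML, mul_assoc, mul_assoc, mul_nonsing_inv _ hL, mul_one]

lemma SimilarMat.trans {M N O : Matrix (Fin 4) (Fin 4) ℝ} (hMN : SimilarMat M N)
    (hNO : SimilarMat N O) : SimilarMat M O := by
  obtain ⟨L, hL, hML⟩ := hMN
  obtain ⟨K, hK, hNK⟩ := hNO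
  refine ⟨L * K, by rw [det_mul]; exact hL.mul hK, ?_⟩
  rw [← mul_assoc, hML, mul_assoc, hNK, mul_assoc]

lemma similarMat_nipRankOne_single {c : ℝ} (hc : c ≠ 0) {a : V4} (ha0 : a ≠ 0)
    (ha : nip a a = 0) : SimilarMat (nipRankOne c a) (single 0 1 1) := by
  obtain ⟨b, p, q, hb, hp, hq, hdet⟩ := exists_null_frame hc ha0 ha
  exact ⟨_, by rwa [det_transpose], nipRankOne_mul_frame ha hb hp hq⟩

/-- Section 3.4 (case `κ₀ = 0`): for `A = κ_P A^P` with `P` an adapted paracomplex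
structure and `κ_P ≠ 0`, the Jacobi operator on a null vector `v` is
`y ↦ 3κ_P⟨y,Pv⟩Pv`, and the model is null Jordan Osserman. -/
theorem pure_paracomplex_null_jordan_osserman (P : Matrix (Fin 4) (Fin 4) ℝ)
    (hP : AdaptedParaStructure P) (κP : ℝ) (hκP : κP ≠ 0)
    (A : V4 → V4 → V4 → V4 → ℝ)
    (hA : A = fun x y z w => κP * AcurvPsi P x y z w) :
    (∀ v y : V4, nip v v = 0 →
      (jacobi A v).mulVec y = (3 * κP * nip y (P.mulVec v)) • P.mulVec v) ∧
    NullJordanOsserman A := by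
  have hJ (v : V4) : jacobi A v = nipRankOne (3 * κP) (P *ᵥ v) :=
    jacobi_eq_nipRankOne fun y z => by simp only [hA]; rw [hP.1.AcurvPsi_jacobi]; ring
  have hnull (v : V4) (hv : v ≠ 0) (hvv : nip v v = 0) :
      SimilarMat (jacobi A v) (single 0 1 1) := by
    rw [hJ]
    refine similarMat_nipRankOne_single (mul_ne_zero three_ne_zero hκP) (hP.mulVec_ne_zero hv) ?_
    rw [hP.nip_mulVec_mulVec, hvv, neg_zero]
  refine ⟨fun v y _ => by rw [hJ, nipRankOne_mulVec], ?_⟩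
  intro u w hu hw huu hww
  exact (hnull u hu huu).trans (hnull w hw hww).symm
end

section
/- Let α, β ∈ ℝ, let δ = ±1, and let A be the algebraic curvature tensor on V whose nonvanishing components relative to the standard basis (up to the curvature symmetries) are A₁₂₂₁ = A₄₃₃₄ = δ(α − 1/2), A₁₃₃₁ = A₄₂₂₄ = −δ(α + 1/2), A₁₄₄₁ = A₃₂₂₃ = −β, A₂₁₁₃ = A₂₄₄₃ = −δ/2, A₁₂₂₄ = A₁₃₃₄ = δ/2, A₁₂₃₄ = (δ(−α + 3/2) + β)/3, A₁₄₂₃ = 2(δα − β)/3, A₁₃₄₂ = (δ(−α − 3/2) + β)/3 (a Type II spacelike Osserman tensor). Then for the null vectors u = e₂ − e₃ and v = e₂ + e₃ one has: if β = 0 then rank(J_A(u)) = 0 and rank(J_A(v)) = 1, and if β ≠ 0 then rank(J_A(u)) = 1 and rank(J_A(v)) = 2; in either case rank(J_A(u)) ≠ rank(J_A(v)), so the model 𝔐 = (V,⟨·,·⟩,A) is not null Jordan Osserman. -/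
/-! On the null vectors `u = e₂ − e₃` and `v = e₂ + e₃` the Jacobi operators can be written
down from the components: `J(u)` only has the `β`-block on `span{e₂, e₃}`, while `J(v)` has, in
addition, a `2δ`-block on `span{e₁, e₄}`. Row and column operations bring them to
`diag(β, 0, 0, 0)` and `diag(2δ, β, 0, 0)`, so since `δ ≠ 0` their ranks always differ by one.
Similar matrices have equal rank, so `J(u)` and `J(v)` are not similar. -/

open Matrix BigOperators

/-- Component tensor of the Type II example. -/
noncomputable def TypeIIComp (α β δ : ℝ) : Fin 4 → Fin 4 → Fin 4 → Fin 4 → ℝ := fun i j k l =>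
  ![
    ![
      !![0, 0, 0, 0;
         0, 0, 0, 0;
         0, 0, 0, 0;
         0, 0, 0, 0],
      !![0, (1 / 2) * δ - (δ * α), (1 / 2) * δ, 0;
         (-1 / 2) * δ + (δ * α), 0, 0, (1 / 2) * δ;
         (-1 / 2) * δ, 0, 0, (1 / 3) * β + (1 / 2) * δ + (-1 / 3) * (δ * α);
         0, (-1 / 2) * δ, (-1 / 3) * β + (-1 / 2) * δ + (1 / 3) * (δ * α), 0],
      !![0, (1 / 2) * δ, (1 / 2) * δ + (δ * α), 0;
         (-1 / 2) * δ, 0, 0, (-1 / 3) * β + (1 / 2) * δ + (1 / 3) * (δ * α);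
         (-1 / 2) * δ - (δ * α), 0, 0, (1 / 2) * δ;
         0, (1 / 3) * β + (-1 / 2) * δ + (-1 / 3) * (δ * α), (-1 / 2) * δ, 0],
      !![0, 0, 0, β;
         0, 0, (-2 / 3) * β + (2 / 3) * (δ * α), 0;
         0, (2 / 3) * β + (-2 / 3) * (δ * α), 0, 0;
         -β, 0, 0, 0]
    ],
    ![
      !![0, (-1 / 2) * δ + (δ * α), (-1 / 2) * δ, 0;
         (1 / 2) * δ - (δ * α), 0, 0, (-1 / 2) * δ;
         (1 / 2) * δ, 0, 0, (-1 / 3) * β + (-1 / 2) * δ + (1 / 3) * (δ * α);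
         0, (1 / 2) * δ, (1 / 3) * β + (1 / 2) * δ + (-1 / 3) * (δ * α), 0],
      !![0, 0, 0, 0;
         0, 0, 0, 0;
         0, 0, 0, 0;
         0, 0, 0, 0],
      !![0, 0, 0, (-2 / 3) * β + (2 / 3) * (δ * α);
         0, 0, β, 0;
         0, -β, 0, 0;
         (2 / 3) * β + (-2 / 3) * (δ * α), 0, 0, 0],
      !![0, (1 / 2) * δ, (-1 / 3) * β + (1 / 2) * δ + (1 / 3) * (δ * α), 0;
         (-1 / 2) * δ, 0, 0, (1 / 2) * δ + (δ * α);
         (1 / 3) * β + (-1 / 2) * δ + (-1 / 3) * (δ * α), 0, 0, (1 / 2) * δ;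
         0, (-1 / 2) * δ - (δ * α), (-1 / 2) * δ, 0]
    ],
    ![
      !![0, (-1 / 2) * δ, (-1 / 2) * δ - (δ * α), 0;
         (1 / 2) * δ, 0, 0, (1 / 3) * β + (-1 / 2) * δ + (-1 / 3) * (δ * α);
         (1 / 2) * δ + (δ * α), 0, 0, (-1 / 2) * δ;
         0, (-1 / 3) * β + (1 / 2) * δ + (1 / 3) * (δ * α), (1 / 2) * δ, 0],
      !![0, 0, 0, (2 / 3) * β + (-2 / 3) * (δ * α);
         0, 0, -β, 0;
         0, β, 0, 0;
         (-2 / 3) * β + (2 / 3) * (δ * α), 0, 0, 0],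
      !![0, 0, 0, 0;
         0, 0, 0, 0;
         0, 0, 0, 0;
         0, 0, 0, 0],
      !![0, (1 / 3) * β + (1 / 2) * δ + (-1 / 3) * (δ * α), (1 / 2) * δ, 0;
         (-1 / 3) * β + (-1 / 2) * δ + (1 / 3) * (δ * α), 0, 0, (1 / 2) * δ;
         (-1 / 2) * δ, 0, 0, (1 / 2) * δ - (δ * α);
         0, (-1 / 2) * δ, (-1 / 2) * δ + (δ * α), 0]
    ],
    ![
      !![0, 0, 0, -β;
         0, 0, (2 / 3) * β + (-2 / 3) * (δ * α), 0;
         0, (-2 / 3) * β + (2 / 3) * (δ * α), 0, 0;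
         β, 0, 0, 0],
      !![0, (-1 / 2) * δ, (1 / 3) * β + (-1 / 2) * δ + (-1 / 3) * (δ * α), 0;
         (1 / 2) * δ, 0, 0, (-1 / 2) * δ - (δ * α);
         (-1 / 3) * β + (1 / 2) * δ + (1 / 3) * (δ * α), 0, 0, (-1 / 2) * δ;
         0, (1 / 2) * δ + (δ * α), (1 / 2) * δ, 0],
      !![0, (-1 / 3) * β + (-1 / 2) * δ + (1 / 3) * (δ * α), (-1 / 2) * δ, 0;
         (1 / 3) * β + (1 / 2) * δ + (-1 / 3) * (δ * α), 0, 0, (-1 / 2) * δ;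
         (1 / 2) * δ, 0, 0, (-1 / 2) * δ + (δ * α);
         0, (1 / 2) * δ, (1 / 2) * δ - (δ * α), 0],
      !![0, 0, 0, 0;
         0, 0, 0, 0;
         0, 0, 0, 0;
         0, 0, 0, 0]
    ]
  ] i j k l

theorem IsMultilinear.apply_mid_smul_add {A : V4 → V4 → V4 → V4 → ℝ}
    (hA : IsMultilinear A) (c : ℝ) (x y z w : V4) :
    A x (c • y + z) (c • y + z) w =
      c * (c * A x y y w + A x y z w) + (c * A x z y w + A x z z w) := by
  rw [hA.2.1, hA.2.2.1, hA.2.2.1]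

theorem Matrix.rank_eq_card_of_mul_mul_eq_diagonal {n K : Type*} [Fintype n] [DecidableEq n]
    [Field K] [DecidableEq K] {P Q M : Matrix n n K} {w : n → K}
    (hP : IsUnit P.det) (hQ : IsUnit Q.det) (h : P * M * Q = diagonal w) :
    M.rank = Fintype.card {i // w i ≠ 0} := by
  rw [← rank_diagonal, ← h, rank_mul_eq_left_of_isUnit_det _ _ hQ,
    rank_mul_eq_right_of_isUnit_det _ _ hP]

theorem SimilarMat.rank_eq {M N : Matrix (Fin 4) (Fin 4) ℝ} (h : SimilarMat M N) :
    M.rank = N.rank := by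
  obtain ⟨L, hL, hML⟩ := h
  rw [← rank_mul_eq_left_of_isUnit_det L M hL, hML, rank_mul_eq_right_of_isUnit_det L N hL]

theorem card_ne_zero_vec4 {K : Type*} [Zero K] [DecidableEq K] (a b : K) :
    Fintype.card {i // ![a, b, 0, 0] i ≠ 0} =
      (if a = 0 then 0 else 1) + (if b = 0 then 0 else 1) := by
  rw [Fintype.card_subtype, Finset.card_filter, Fin.sum_univ_four]
  by_cases ha : a = 0 <;> by_cases hb : b = 0 <;> simp [ha, hb]

section TypeII

variable {α β δ : ℝ} {A : V4 → V4 → V4 → V4 → ℝ}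

theorem jacobi_typeII_sub (hA : IsMultilinear A)
    (hcomp : ∀ i j k l : Fin 4,
      A (stdb i) (stdb j) (stdb k) (stdb l) = TypeIIComp α β δ i j k l) :
    jacobi A (stdb 1 - stdb 2) = !![0, 0, 0, 0; 0, β, β, 0; 0, -β, -β, 0; 0, 0, 0, 0] := by
  have hu : stdb 1 - stdb 2 = (-1 : ℝ) • stdb 2 + stdb 1 := by
    rw [neg_one_smul, neg_add_eq_sub]
  ext i j
  rw [jacobi, of_apply, hu, hA.apply_mid_smul_add]
  simp only [hcomp]
  fin_cases i <;> fin_cases j <;>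
    simp only [TypeIIComp, eps, Fin.reduceFinMk, of_apply, cons_val, Fin.isValue] <;> ring

theorem jacobi_typeII_add (hA : IsMultilinear A)
    (hcomp : ∀ i j k l : Fin 4,
      A (stdb i) (stdb j) (stdb k) (stdb l) = TypeIIComp α β δ i j k l) :
    jacobi A (stdb 1 + stdb 2) =
      !![2 * δ, 0, 0, -2 * δ; 0, β, -β, 0; 0, β, -β, 0; 2 * δ, 0, 0, -2 * δ] := by
  have hv : stdb 1 + stdb 2 = (1 : ℝ) • stdb 2 + stdb 1 := by
    rw [one_smul, add_comm]
  ext i j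
  rw [jacobi, of_apply, hv, hA.apply_mid_smul_add]
  simp only [hcomp]
  fin_cases i <;> fin_cases j <;>
    simp only [TypeIIComp, eps, Fin.reduceFinMk, of_apply, cons_val, Fin.isValue] <;> ring

theorem rank_jacobi_typeII_sub (hA : IsMultilinear A)
    (hcomp : ∀ i j k l : Fin 4,
      A (stdb i) (stdb j) (stdb k) (stdb l) = TypeIIComp α β δ i j k l) :
    (jacobi A (stdb 1 - stdb 2)).rank = if β = 0 then 0 else 1 := by
  have hP : IsUnit (!![0, 1, 0, 0; 1, 0, 0, 0; 0, 1, 1, 0; 0, 0, 0, 1] :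
      Matrix (Fin 4) (Fin 4) ℝ).det := by
    simp [det_succ_row_zero, Fin.sum_univ_succ, Fin.succAbove]
  have hQ : IsUnit (!![0, 1, 0, 0; 1, 0, -1, 0; 0, 0, 1, 0; 0, 0, 0, 1] :
      Matrix (Fin 4) (Fin 4) ℝ).det := by
    simp [det_succ_row_zero, Fin.sum_univ_succ, Fin.succAbove]
  have hdiag : !![0, 1, 0, 0; 1, 0, 0, 0; 0, 1, 1, 0; 0, 0, 0, 1] * jacobi A (stdb 1 - stdb 2) *
      !![0, 1, 0, 0; 1, 0, -1, 0; 0, 0, 1, 0; 0, 0, 0, 1] = diagonal ![β, 0, 0, 0] := by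
    rw [jacobi_typeII_sub hA hcomp]
    ext i j
    fin_cases i <;> fin_cases j <;> simp [mul_apply, Fin.sum_univ_four]
  rw [rank_eq_card_of_mul_mul_eq_diagonal hP hQ hdiag, card_ne_zero_vec4]
  simp

theorem rank_jacobi_typeII_add (hA : IsMultilinear A)
    (hcomp : ∀ i j k l : Fin 4,
      A (stdb i) (stdb j) (stdb k) (stdb l) = TypeIIComp α β δ i j k l) (hδ : δ ≠ 0) :
    (jacobi A (stdb 1 + stdb 2)).rank = if β = 0 then 1 else 2 := by
  have hP : IsUnit (!![1, 0, 0, 0; 0, 1, 0, 0; 0, -1, 1, 0; -1, 0, 0, 1] :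
      Matrix (Fin 4) (Fin 4) ℝ).det := by
    simp [det_succ_row_zero, Fin.sum_univ_succ, Fin.succAbove]
  have hQ : IsUnit (!![1, 0, 0, 1; 0, 1, 1, 0; 0, 0, 1, 0; 0, 0, 0, 1] :
      Matrix (Fin 4) (Fin 4) ℝ).det := by
    simp [det_succ_row_zero, Fin.sum_univ_succ, Fin.succAbove]
  have hdiag : !![1, 0, 0, 0; 0, 1, 0, 0; 0, -1, 1, 0; -1, 0, 0, 1] * jacobi A (stdb 1 + stdb 2) *
      !![1, 0, 0, 1; 0, 1, 1, 0; 0, 0, 1, 0; 0, 0, 0, 1] = diagonal ![2 * δ, β, 0, 0] := by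
    rw [jacobi_typeII_add hA hcomp]
    ext i j
    fin_cases i <;> fin_cases j <;> simp [mul_apply, Fin.sum_univ_four]
  rw [rank_eq_card_of_mul_mul_eq_diagonal hP hQ hdiag, card_ne_zero_vec4]
  split_ifs <;> simp_all

end TypeII

theorem stdb_one_sub_stdb_two_ne_zero : stdb 1 - stdb 2 ≠ 0 := fun h => by
  simpa [stdb] using congrFun h 1

theorem stdb_one_add_stdb_two_ne_zero : stdb 1 + stdb 2 ≠ 0 := fun h => by
  simpa [stdb] using congrFun h 1

theorem nip_stdb_one_sub_stdb_two : nip (stdb 1 - stdb 2) (stdb 1 - stdb 2) = 0 := by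
  simp [nip, stdb]

theorem nip_stdb_one_add_stdb_two : nip (stdb 1 + stdb 2) (stdb 1 + stdb 2) = 0 := by
  simp [nip, stdb]

/-- Section 3.7: a Type II spacelike Osserman model of signature (2,2), given by its
components `TypeIIComp α β δ` (`δ = ±1`) relative to the standard basis, is not null
Jordan Osserman: for the null vectors `u = e₂ − e₃` and `v = e₂ + e₃` the ranks of the
Jacobi operators differ. -/
theorem type_II_not_null_jordan_osserman (α β δ : ℝ) (hδ : δ = 1 ∨ δ = -1)
    (A : V4 → V4 → V4 → V4 → ℝ) (hA : IsModel A)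
    (hcomp : ∀ i j k l : Fin 4,
      A (stdb i) (stdb j) (stdb k) (stdb l) = TypeIIComp α β δ i j k l) :
    ((β = 0 → (jacobi A (stdb 1 - stdb 2)).rank = 0 ∧
        (jacobi A (stdb 1 + stdb 2)).rank = 1) ∧
     (β ≠ 0 → (jacobi A (stdb 1 - stdb 2)).rank = 1 ∧
        (jacobi A (stdb 1 + stdb 2)).rank = 2)) ∧
    (jacobi A (stdb 1 - stdb 2)).rank ≠ (jacobi A (stdb 1 + stdb 2)).rank ∧
    ¬ NullJordanOsserman A := by
  have hδ0 : δ ≠ 0 := by rcases hδ with rfl | rfl <;> norm_num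
  have hu := rank_jacobi_typeII_sub hA.1 hcomp
  have hv := rank_jacobi_typeII_add hA.1 hcomp hδ0
  have hne : (jacobi A (stdb 1 - stdb 2)).rank ≠ (jacobi A (stdb 1 + stdb 2)).rank := by
    rw [hu, hv]
    split_ifs <;> norm_num
  refine ⟨⟨fun hβ => by simp [hu, hv, hβ], fun hβ => by simp [hu, hv, hβ]⟩, hne,
    fun hNJO => hne ?_⟩
  exact (hNJO _ _ stdb_one_sub_stdb_two_ne_zero stdb_one_add_stdb_two_ne_zero
    nip_stdb_one_sub_stdb_two nip_stdb_one_add_stdb_two).rank_eq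
end
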